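/- arXiv:2502.07187 — 7 statements merged into one kernel-verified Lean document; each statement's English description precedes it below -/
import Mathlib

section
/- There exists a learner A such that for every h* ∈ H_OTP, every n ≥ 1, and every sequence S = (x_1,…,x_n) ∈ ℕ^n, the transductive error satisfies L^T_{S,h*}(A) ≤ 2/n. In particular, H_OTP is transductively learnable. -/
open scoped Classical

noncomputable section

/-- Binary strings of length `d`, i.e. elements of `{0,1}^d`. -/
abbrev BStr (d : ℕ) := Fin d → Bool

/-- Entrywise XOR of two binary strings. -/
def bxor {d : ℕ} (A B : BStr d) : BStr d := fun i => xor (A i) (B i)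

/-- `σ₀(C)`: the positions at which `C` takes the value `0`. -/
def sigma0 {d : ℕ} (C : BStr d) : Finset (Fin d) := Finset.univ.filter fun i => C i = false

/-- `σ₁(C)`: the positions at which `C` takes the value `1`. -/
def sigma1 {d : ℕ} (C : BStr d) : Finset (Fin d) := Finset.univ.filter fun i => C i = true

/-- A binary string is balanced if it has as many `0`-entries as `1`-entries. -/
def BalancedStr {d : ℕ} (C : BStr d) : Prop := (sigma0 C).card = (sigma1 C).card

/-- The label space `Y = {0,1} × {0,1}^*`. -/
abbrev Label : Type := Bool × List Bool

/-- The hypothesis `h_{A,B} : ℕ → Y`, mapping `x` to `(0, A)` if `(A ⊕ B)(x mod d) = 0`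
and to `(1, B)` if `(A ⊕ B)(x mod d) = 1`. -/
def hyp {d : ℕ} (A B : BStr d) : ℕ → Label := fun x =>
  if hd : 0 < d then
    if bxor A B ⟨x % d, Nat.mod_lt x hd⟩ = true then (true, List.ofFn B)
    else (false, List.ofFn A)
  else (false, List.ofFn A)

/-- The secret-sharing hypothesis class `H_OTP`. -/
def HOTP : Set (ℕ → Label) :=
  { h | ∃ (d : ℕ) (A B : BStr d), 1 ≤ d ∧ BalancedStr (bxor A B) ∧ h = hyp A B }

/-- The training sequence obtained by labeling the points of `S` by `h` and removing
the `i`-th (labeled) point. -/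
def trainSeq {X Y : Type*} {n : ℕ} (S : Fin n → X) (h : X → Y) (i : Fin n) :
    List (X × Y) :=
  (List.ofFn fun j => (S j, h (S j))).eraseIdx i

/-- The transductive error `L^T_{S,h}(Alg)` of the learner `Alg` on the instance `(S, h)`. -/
def transErr {X Y : Type*} {n : ℕ} (Alg : List (X × Y) → X → Y) (S : Fin n → X)
    (h : X → Y) : ℝ :=
  (∑ i : Fin n, if Alg (trainSeq S h i) (S i) = h (S i) then (0 : ℝ) else 1) / n

/-- `Alg` is a transductive learner for the class `H`. -/
def TransLearner {X Y : Type*} (H : Set (X → Y)) (Alg : List (X × Y) → X → Y) : Prop :=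
  ∃ m : ℝ → ℕ, ∀ ε : ℝ, 0 < ε → ε < 1 → ∀ h ∈ H, ∀ (n : ℕ) (S : Fin n → X),
    m ε ≤ n → transErr Alg S h ≤ ε

/-- The class `H` is transductively learnable. -/
def TransLearnable {X Y : Type*} (H : Set (X → Y)) : Prop :=
  ∃ Alg : List (X × Y) → X → Y, TransLearner H Alg

/-- The empirical risk `L_S(h)`: the fraction of examples in `S` mislabeled by `h`. -/
def empRisk {X Y : Type*} (S : List (X × Y)) (h : X → Y) : ℝ :=
  ((S.map fun p => if h p.1 = p.2 then (0 : ℝ) else 1).sum) / S.length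

/-- The learner `Alg` is induced by the local regularizer `ψ : H × X → ℝ≥0`: whenever
the argmin set `M(S,x)` of `ψ(·, x)` over zero-empirical-risk hypotheses is nonempty,
`Alg S x` agrees with some hypothesis in `M(S,x)` at `x`. -/
def InducedBy {X Y : Type*} (H : Set (X → Y)) (ψ : H → X → NNReal)
    (Alg : List (X × Y) → X → Y) : Prop :=
  ∀ (S : List (X × Y)) (x : X),
    (∃ h : H, empRisk S h.1 = 0 ∧ ∀ g : H, empRisk S g.1 = 0 → ψ h x ≤ ψ g x) →
    ∃ h : H, empRisk S h.1 = 0 ∧ (∀ g : H, empRisk S g.1 = 0 → ψ h x ≤ ψ g x) ∧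
      Alg S x = h.1 x

/-- A local regularizer is locally injective if `ψ(·, x)` is injective for every `x`. -/
def LocallyInjective {X Y : Type*} (H : Set (X → Y)) (ψ : H → X → NNReal) : Prop :=
  ∀ x : X, Function.Injective fun h : H => ψ h x

/-- A class is generalized binary if each of its hypotheses has image of size at most 2. -/
def GeneralizedBinary {X Y : Type*} (H : Set (X → Y)) : Prop :=
  ∀ h ∈ H, ∃ y₁ y₂ : Y, ∀ x : X, h x = y₁ ∨ h x = y₂

/-- A class has distinct label sets if `im` is injective on it. -/
def DistinctLabelSets {X Y : Type*} (H : Set (X → Y)) : Prop :=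
  ∀ h ∈ H, ∀ h' ∈ H, Set.range h = Set.range h' → h = h'

/-- A class is GBDLS if it is generalized binary and has distinct label sets. -/
def GBDLS {X Y : Type*} (H : Set (X → Y)) : Prop :=
  GeneralizedBinary H ∧ DistinctLabelSets H

/-- `e(i)`: the standard basis string, with a single `1` in position `i`. -/
def evec {d : ℕ} (i : Fin d) : BStr d := fun j => decide (j = i)

/-- `C ⊕ e(x) ⊕ e(x')`: the string `C` with its `x`-th and `x'`-th entries flipped. -/
def flip2 {d : ℕ} (C : BStr d) (x x' : Fin d) : BStr d := bxor (bxor C (evec x)) (evec x')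

/-- The training sequence consisting of the examples `(s, h s)` for `s ∈ S`
(listed in increasing order). -/
def trainOn {d : ℕ} (S : Finset (Fin d)) (h : ℕ → Label) : List (ℕ × Label) :=
  (S.sort (· ≤ ·)).map fun s => ((s : ℕ), h (s : ℕ))

/-!
Each `h_{A,B}` takes only the two values `(0, A)` and `(1, B)`, and one example of each value
reveals `A` and `B`, hence `h_{A,B}` itself. The learner that decodes `h_{A,B}` once it has seen
both label types, and otherwise repeats the one label it has seen, can therefore err on the
left-out point only if that point is the unique point of `S` of its label type: at most one point
per type, so at most two errors among the `n` leave-one-out rounds.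
-/

section Transductive

variable {X Y : Type*}

lemma mem_trainSeq {n : ℕ} (S : Fin n → X) (h : X → Y) {i j : Fin n} (hji : j ≠ i) :
    (S j, h (S j)) ∈ trainSeq S h i := by
  rw [trainSeq, List.mem_eraseIdx_iff_getElem]
  exact ⟨j, by simp, by simpa using Fin.val_ne_of_ne hji, by simp⟩

lemma snd_eq_of_mem_trainSeq {n : ℕ} {S : Fin n → X} {h : X → Y} {i : Fin n}
    {p : X × Y} (hp : p ∈ trainSeq S h i) : p.2 = h p.1 := by
  rw [trainSeq, List.mem_eraseIdx_iff_getElem] at hp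
  obtain ⟨k, hk, -, rfl⟩ := hp
  simp

variable {K : Type*} [Fintype K]

/-- A mistake in round `i` forces `i` to be the only index of its `κ`-class. -/
theorem card_transductive_mistakes_le (Alg : List (X × Y) → X → Y) (h : X → Y) (κ : Y → K)
    (hAlg : ∀ (T : List (X × Y)) (x : X), (∀ p ∈ T, p.2 = h p.1) →
      (∃ p ∈ T, κ p.2 = κ (h x)) → Alg T x = h x)
    {n : ℕ} (S : Fin n → X) :
    (Finset.univ.filter fun i => Alg (trainSeq S h i) (S i) ≠ h (S i)).card ≤
      Fintype.card K := by
  refine Finset.card_le_card_of_injOn (fun i => κ (h (S i))) (fun _ _ => Finset.mem_univ _) ?_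
  intro i hi i' hi' hκ
  by_contra hne
  refine (Finset.mem_filter.mp hi).2 (hAlg _ _ (fun p => snd_eq_of_mem_trainSeq) ?_)
  exact ⟨_, mem_trainSeq S h (Ne.symm hne), hκ.symm⟩

theorem transErr_le_card_div (Alg : List (X × Y) → X → Y) (h : X → Y) (κ : Y → K)
    (hAlg : ∀ (T : List (X × Y)) (x : X), (∀ p ∈ T, p.2 = h p.1) →
      (∃ p ∈ T, κ p.2 = κ (h x)) → Alg T x = h x)
    {n : ℕ} (S : Fin n → X) :
    transErr Alg S h ≤ Fintype.card K / n := by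
  have hsum : (∑ i : Fin n, if Alg (trainSeq S h i) (S i) = h (S i) then (0 : ℝ) else 1) =
      (Finset.univ.filter fun i => Alg (trainSeq S h i) (S i) ≠ h (S i)).card := by
    rw [Finset.natCast_card_filter]
    simp only [ne_eq, ite_not]
  rw [transErr, hsum]
  gcongr
  exact_mod_cast card_transductive_mistakes_le Alg h κ hAlg S

end Transductive

theorem transLearner_of_transErr_le_div {X Y : Type*} {H : Set (X → Y)}
    {Alg : List (X × Y) → X → Y} (c : ℝ)
    (hc : ∀ h ∈ H, ∀ (n : ℕ) (S : Fin n → X), transErr Alg S h ≤ c / n) :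
    TransLearner H Alg := by
  refine ⟨fun ε => ⌈c / ε⌉₊, fun ε hε _ h hh n S hn => (hc h hh n S).trans ?_⟩
  rcases n.eq_zero_or_pos with rfl | hn₀
  · simpa using hε.le
  · have hn₀' : (0 : ℝ) < n := by exact_mod_cast hn₀
    rw [div_le_iff₀ hn₀', ← div_le_iff₀' hε]
    exact (Nat.le_ceil _).trans (by exact_mod_cast hn)

lemma hyp_eq_or {d : ℕ} (A B : BStr d) (x : ℕ) :
    hyp A B x = (false, List.ofFn A) ∨ hyp A B x = (true, List.ofFn B) := by
  unfold hyp
  split_ifs <;> simp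

lemma hyp_eq_of_fst_eq {d : ℕ} {A B : BStr d} {x y : ℕ} (hxy : (hyp A B x).1 = (hyp A B y).1) :
    hyp A B x = hyp A B y := by
  rcases hyp_eq_or A B x with hx | hx <;> rcases hyp_eq_or A B y with hy | hy <;> simp_all

/-- `h_{A,B}` rebuilt from the lists `A` and `B` carried by its two labels. -/
def hypOfLists (a b : List Bool) (x : ℕ) : Label :=
  if xor (a.getD (x % a.length) false) (b.getD (x % a.length) false) then (true, b)
  else (false, a)

lemma hypOfLists_ofFn {d : ℕ} (A B : BStr d) :
    hypOfLists (List.ofFn A) (List.ofFn B) = hyp A B := by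
  funext x
  rcases d.eq_zero_or_pos with rfl | hd
  · simp [hypOfLists, hyp]
  · have hx : x % d < d := Nat.mod_lt x hd
    simp [hypOfLists, hyp, hd, bxor, hx]

def otpLearner (T : List (ℕ × Label)) (x : ℕ) : Label :=
  match T.find? (fun p => !p.2.1), T.find? (fun p => p.2.1) with
  | some p₀, some p₁ => hypOfLists p₀.2.2 p₁.2.2 x
  | some p, none | none, some p => p.2
  | none, none => (false, [])

theorem otpLearner_eq_hyp {d : ℕ} (A B : BStr d) {T : List (ℕ × Label)} {x : ℕ}
    (hT : ∀ p ∈ T, p.2 = hyp A B p.1) (hx : ∃ p ∈ T, p.2.1 = (hyp A B x).1) :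
    otpLearner T x = hyp A B x := by
  have hsame : ∀ p ∈ T, p.2.1 = (hyp A B x).1 → p.2 = hyp A B x := fun p hp hpx =>
    (hT p hp).trans (hyp_eq_of_fst_eq (by rwa [← hT p hp]))
  obtain ⟨q, hq, hqx⟩ := hx
  unfold otpLearner
  split
  next p₀ p₁ h₀ h₁ =>
    have e₀ : p₀.2.2 = List.ofFn A := by
      have := List.find?_some h₀
      rcases hyp_eq_or A B p₀.1 with h | h <;> simp_all [hT p₀ (List.mem_of_find?_eq_some h₀)]
    have e₁ : p₁.2.2 = List.ofFn B := by
      have := List.find?_some h₁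
      rcases hyp_eq_or A B p₁.1 with h | h <;> simp_all [hT p₁ (List.mem_of_find?_eq_some h₁)]
    rw [e₀, e₁, hypOfLists_ofFn]
  next p h₀ h₁ =>
    have hq₁ := List.find?_eq_none.mp h₁ q hq
    have hp := List.find?_some h₀
    refine hsame p (List.mem_of_find?_eq_some h₀) ?_
    simp_all
  next p h₀ h₁ =>
    have hq₀ := List.find?_eq_none.mp h₀ q hq
    have hp := List.find?_some h₁
    refine hsame p (List.mem_of_find?_eq_some h₁) ?_
    simp_all
  next h₀ h₁ =>
    have hq₀ := List.find?_eq_none.mp h₀ q hq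
    have hq₁ := List.find?_eq_none.mp h₁ q hq
    simp_all

theorem transErr_otpLearner_le {h : ℕ → Label} (hh : h ∈ HOTP) {n : ℕ} (S : Fin n → ℕ) :
    transErr otpLearner S h ≤ 2 / n := by
  obtain ⟨d, A, B, -, -, rfl⟩ := hh
  simpa using transErr_le_card_div otpLearner (hyp A B) Prod.fst
    (fun _ _ hT hx => otpLearner_eq_hyp A B hT hx) S

/-- some learner achieves transductive error at most `2/n` on every
transductive instance for `H_OTP` with `n ≥ 1` points; in particular `H_OTP` is
transductively learnable. -/
theorem statement1 :
    (∃ Alg : List (ℕ × Label) → ℕ → Label,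
      ∀ h ∈ HOTP, ∀ n : ℕ, 1 ≤ n → ∀ S : Fin n → ℕ,
        transErr Alg S h ≤ 2 / (n : ℝ)) ∧
    TransLearnable HOTP :=
  ⟨⟨otpLearner, fun _ hh _ _ S => transErr_otpLearner_le hh S⟩,
    otpLearner, transLearner_of_transErr_le_div 2 fun _ hh _ S => transErr_otpLearner_le hh S⟩
end
end

section
/- Let Y be a set and let F be a finite nonempty set of functions f : {1,2,3} → Y such that every f ∈ F satisfies |im(f)| ≤ 2 and the map f ↦ im(f) is injective on F. Then there exist f ∈ F and i ∈ {1,2,3} such that f has no i-neighbor in F, i.e., there is no g ∈ F with g(j) = f(j) for all j ≠ i and g(i) ≠ f(i). -/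
open scoped Classical

noncomputable section

/-!
If `f` repeats the value at `i` elsewhere, `f i = f k` with `k ≠ i`, while some `f j` differs,
then any `i`-neighbor `g` of `f` taking at most two values already takes the two distinct
values `f j` and `f k` off `i`, so `g i` is one of them and `g` has the same image as `f`.
Distinct label sets then force `g = f`, which is absurd. On three points every non-constant
function with at most two values has such a repetition, and if all of `F` is constant then
no member has a neighbor at all.
-/

open Set

section Neighbors

variable {X Y : Type*}

theorem exists_ne_map_eq_of_two_valued [Fintype X] (hX : 2 < Fintype.card X) {f : X → Y}
    {y₁ y₂ : Y} (hf : ∀ x, f x = y₁ ∨ f x = y₂) : ∃ i k, i ≠ k ∧ f i = f k := by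
  classical
  obtain ⟨i, -, k, -, hik, h⟩ := Finset.exists_ne_map_eq_of_card_lt_of_maps_to
    (s := Finset.univ) (t := {y₁, y₂}) (Finset.card_le_two.trans_lt hX)
    (fun x _ => by simpa using hf x)
  exact ⟨i, k, hik, h⟩

theorem range_eq_of_agree_off {f g : X → Y} {i j k : X} (hki : k ≠ i) (hfik : f i = f k)
    (hfjk : f j ≠ f k) (hgf : ∀ x, x ≠ i → g x = f x) {y₁ y₂ : Y}
    (hg : ∀ x, g x = y₁ ∨ g x = y₂) : range g = range f := by
  have hji : j ≠ i := by rintro rfl; exact hfjk hfik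
  have hgi : g i = g j ∨ g i = g k := by
    have hgjk : g j ≠ g k := by rwa [hgf j hji, hgf k hki]
    rcases hg i with h | h <;> rcases hg j with h' | h' <;> rcases hg k with h'' | h'' <;>
      simp_all
  ext y
  constructor
  · rintro ⟨x, rfl⟩
    by_cases hx : x = i
    · subst hx
      rcases hgi with h | h
      · exact ⟨j, by rw [h, hgf j hji]⟩
      · exact ⟨k, by rw [h, hgf k hki]⟩
    · exact ⟨x, (hgf x hx).symm⟩
  · rintro ⟨x, rfl⟩
    by_cases hx : x = i
    · exact ⟨k, by rw [hx, hfik, hgf k hki]⟩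
    · exact ⟨x, hgf x hx⟩

theorem not_exists_neighbor_of_map_eq {F : Set (X → Y)} (hbin : GeneralizedBinary F)
    (hinj : DistinctLabelSets F) {f : X → Y} (hf : f ∈ F) {i j k : X} (hki : k ≠ i)
    (hfik : f i = f k) (hfjk : f j ≠ f k) :
    ¬ ∃ g ∈ F, (∀ x, x ≠ i → g x = f x) ∧ g i ≠ f i := by
  rintro ⟨g, hg, hgf, hgi⟩
  obtain ⟨y₁, y₂, hy⟩ := hbin g hg
  exact hgi (congrFun (hinj g hg f hf (range_eq_of_agree_off hki hfik hfjk hgf hy)) i)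

end Neighbors

theorem statement5_general {Y : Type*} (F : Set (Fin 3 → Y))
    (hne : F.Nonempty)
    (hbin : ∀ f ∈ F, ∃ y₁ y₂ : Y, ∀ i : Fin 3, f i = y₁ ∨ f i = y₂)
    (hinj : ∀ f ∈ F, ∀ g ∈ F, Set.range f = Set.range g → f = g) :
    ∃ f ∈ F, ∃ i : Fin 3,
      ¬ ∃ g ∈ F, (∀ j : Fin 3, j ≠ i → g j = f j) ∧ g i ≠ f i := by
  by_cases hconst : ∃ f ∈ F, ∃ a b, f a ≠ f b
  · obtain ⟨f, hf, a, b, hab⟩ := hconst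
    obtain ⟨y₁, y₂, hy⟩ := hbin f hf
    obtain ⟨i, k, hik, hfik⟩ := exists_ne_map_eq_of_two_valued (by simp) hy
    obtain ⟨j, hfj⟩ : ∃ j, f j ≠ f k := by
      by_contra! h
      exact hab ((h a).trans (h b).symm)
    exact ⟨f, hf, i, not_exists_neighbor_of_map_eq hbin hinj hf hik.symm hfik hfj⟩
  · push Not at hconst
    obtain ⟨f, hf⟩ := hne
    refine ⟨f, hf, 0, fun ⟨g, hg, hgf, hg0⟩ => hg0 ?_⟩
    rw [hconst g hg 0 1, hgf 1 (by decide), hconst f hf 1 0]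

/-- if `F` is a finite nonempty family of functions `{1,2,3} → Y`, each
with image of size at most 2, on which `f ↦ im(f)` is injective, then some `f ∈ F`
has no `i`-neighbor in `F` for some coordinate `i`. -/
theorem statement5 {Y : Type*} (F : Set (Fin 3 → Y)) (hfin : F.Finite)
    (hne : F.Nonempty)
    (hbin : ∀ f ∈ F, ∃ y₁ y₂ : Y, ∀ i : Fin 3, f i = y₁ ∨ f i = y₂)
    (hinj : ∀ f ∈ F, ∀ g ∈ F, Set.range f = Set.range g → f = g) :
    ∃ f ∈ F, ∃ i : Fin 3,
      ¬ ∃ g ∈ F, (∀ j : Fin 3, j ≠ i → g j = f j) ∧ g i ≠ f i :=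
  statement5_general F hne hbin hinj
end
end

section
/- Let H ⊆ Y^X be a countable hypothesis class. Then H can be transductively learned by a local regularizer if and only if H can be transductively learned by a locally injective local regularizer. -/
open scoped Classical

noncomputable section

/-!
Tie-break a local regularizer `ψ(·, x)` by an enumeration `f : H → ℕ`: the lexicographic order
on `(ψ(h, x), f h)` is a countable linear order, so it embeds into `ℝ≥0`, giving a locally
injective `ψ'`. Every `ψ'`-minimizer is a `ψ`-minimizer, and whenever `ψ` attains its minimum
the `ψ`-minimizer of least index is a `ψ'`-minimizer. Hence every learner induced by `ψ'` is
induced by `ψ`.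
-/

open Function

theorem exists_injective_refinement {α : Type*} [Countable α] (φ : α → NNReal) :
    ∃ φ' : α → NNReal, Injective φ' ∧ (∀ a b, φ' a ≤ φ' b → φ a ≤ φ b) ∧
      ∀ s : Set α, (∃ a ∈ s, IsMinOn φ s a) → ∃ a ∈ s, IsMinOn φ' s a := by
  obtain ⟨f, hf⟩ := Countable.exists_injective_nat α
  let F : α → Lex (NNReal × ℕ) := fun a => toLex (φ a, f a)
  have hF : Injective F := fun a b h => hf (congrArg (fun p => (ofLex p).2) h)
  have : Countable (Set.range F) := (Set.countable_range F).to_subtype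
  obtain ⟨e⟩ := Order.embedding_from_countable_to_dense (Set.range F) NNReal
  let φ' : α → NNReal := fun a => e ⟨F a, a, rfl⟩
  have hle : ∀ a b, φ' a ≤ φ' b ↔ F a ≤ F b := fun a b => e.le_iff_le
  refine ⟨φ', e.injective.comp fun a b h => hF (congrArg Subtype.val h), ?_, ?_⟩
  · intro a b h
    rcases Prod.Lex.toLex_le_toLex.1 ((hle a b).1 h) with h | h
    exacts [h.le, h.1.le]
  · rintro s ⟨a, ha, hmin⟩
    let m := {b ∈ s | IsMinOn φ s b}
    have hm : m.Nonempty := ⟨a, ha, hmin⟩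
    obtain ⟨hbs, hbmin⟩ := argminOn_mem f m hm
    refine ⟨argminOn f m hm, hbs, isMinOn_iff.2 fun c hc => (hle _ _).2 ?_⟩
    refine Prod.Lex.toLex_le_toLex.2 ?_
    rcases (isMinOn_iff.1 hbmin c hc).lt_or_eq with hlt | heq
    · exact Or.inl hlt
    · have hcmin : IsMinOn φ s c := isMinOn_iff.2 fun d hd => heq ▸ isMinOn_iff.1 hbmin d hd
      exact Or.inr ⟨heq, argminOn_le f m ⟨hc, hcmin⟩⟩

theorem InducedBy.of_refinement {X Y : Type*} {H : Set (X → Y)} {ψ ψ' : H → X → NNReal}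
    {Alg : List (X × Y) → X → Y} (hmono : ∀ x g h, ψ' g x ≤ ψ' h x → ψ g x ≤ ψ h x)
    (hmin : ∀ x (s : Set H), (∃ h ∈ s, IsMinOn (ψ · x) s h) → ∃ h ∈ s, IsMinOn (ψ' · x) s h)
    (hAlg : InducedBy H ψ' Alg) : InducedBy H ψ Alg := by
  rintro S x ⟨h, hh, hhmin⟩
  obtain ⟨h', hh', hh'min⟩ := hmin x {g | empRisk S g.1 = 0} ⟨h, hh, isMinOn_iff.2 hhmin⟩
  obtain ⟨g, hg, hgmin, hAlgg⟩ := hAlg S x ⟨h', hh', isMinOn_iff.1 hh'min⟩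
  exact ⟨g, hg, fun g' hg' => hmono x _ _ (hgmin g' hg'), hAlgg⟩

/-- a countable class can be transductively learned by a local
regularizer iff it can be transductively learned by a locally injective one. -/
theorem statement6 {X Y : Type*} (H : Set (X → Y)) (hc : H.Countable) :
    (∃ ψ : H → X → NNReal,
        ∀ Alg : List (X × Y) → X → Y, InducedBy H ψ Alg → TransLearner H Alg) ↔
    (∃ ψ : H → X → NNReal, LocallyInjective H ψ ∧
        ∀ Alg : List (X × Y) → X → Y, InducedBy H ψ Alg → TransLearner H Alg) := by
  constructor
  · rintro ⟨ψ, hψ⟩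
    have : Countable H := hc.to_subtype
    choose ψ' hinj hmono hmin using fun x => exists_injective_refinement (ψ · x)
    exact ⟨fun h x => ψ' x h, hinj, fun Alg hAlg => hψ Alg (hAlg.of_refinement hmono hmin)⟩
  · rintro ⟨ψ, -, hψ⟩
    exact ⟨ψ, hψ⟩
end
end

section
/- Fix d ≥ 1, a balanced C ∈ {0,1}^{2d}, A ∈ {0,1}^{2d}, x_test ∈ σ0(C) and x_fool ∈ σ1(C), and define C̄, Ā, h1, h2, h3, h4, S1, S2, S3, S4 as in the context. Then for every locally injective local regularizer ψ for H_OTP and every learner A induced by ψ, there exists i ∈ {1,2,3,4} such that A(T_i)(x_test) ≠ h_i(x_test), where T_i is the training sequence consisting of the examples (s, h_i(s)) for s ∈ S_i \ {x_test}. -/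
open scoped Classical

noncomputable section

/-! Write `P = A ⊕ B` for the pattern of `h_{A,B}`: it is `C` for `h1, h3` and
`C̄ = C ∘ (x_test x_fool)` for `h2, h4`. A hypothesis of `H_OTP` is determined by its labels on
one level set of its balanced pattern, so a learner that answers correctly on `T_i` must follow
the minimizer `h_i` itself. The next hypothesis `h_{i+1}` is consistent with `T_i` too and differs
from `h_i` at `x_test`, so local injectivity gives `ψ(h_i, x_test) < ψ(h_{i+1}, x_test)`; going
around the four instances yields `ψ(h1, x_test) < ψ(h1, x_test)`. -/

theorem bxor_bxor_self {n : ℕ} (A C : BStr n) : bxor A (bxor C A) = C := by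
  funext i; simp only [bxor]; cases A i <;> cases C i <;> rfl

theorem bxor_flip2_left {n : ℕ} (C A : BStr n) (x x' : Fin n) :
    bxor (flip2 C x x') A = bxor C (flip2 A x x') := by
  funext i; simp only [bxor, flip2]; cases C i <;> cases A i <;> simp

theorem bxor_flip2_flip2 {n : ℕ} (C A : BStr n) (x x' : Fin n) :
    bxor (flip2 C x x') (flip2 A x x') = bxor C A := by
  funext i; simp only [bxor, flip2]; cases C i <;> cases A i <;> simp

theorem flip2_eq_comp_swap {n : ℕ} {C : BStr n} {x x' : Fin n} (h : C x ≠ C x') :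
    flip2 C x x' = C ∘ Equiv.swap x x' := by
  have hxx' : x ≠ x' := fun e => h (e ▸ rfl)
  funext i
  simp only [flip2, bxor, evec, Function.comp_apply, Equiv.swap_apply_def]
  split_ifs <;> simp_all [Bool.eq_not_iff, eq_comm]

def levelSet {n : ℕ} (P : BStr n) (b : Bool) : Finset (Fin n) :=
  Finset.univ.filter fun i => P i = b

theorem sigma0_eq_levelSet {n : ℕ} (P : BStr n) : sigma0 P = levelSet P false := rfl

theorem sigma1_eq_levelSet {n : ℕ} (P : BStr n) : sigma1 P = levelSet P true := rfl

namespace BalancedStr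

variable {n : ℕ} {P : BStr n}

theorem two_mul_card_levelSet (hP : BalancedStr P) (b : Bool) :
    2 * (levelSet P b).card = n := by
  have hsplit := Finset.card_filter_add_card_filter_not (s := Finset.univ) (P · = false)
  simp only [Bool.not_eq_false, Finset.card_univ, Fintype.card_fin] at hsplit
  unfold BalancedStr sigma0 sigma1 at hP
  cases b <;> simp only [levelSet] <;> omega

theorem card_levelSet_erase (hP : BalancedStr P) {b : Bool} {x : Fin n} (hx : P x = b) :
    2 * ((levelSet P b).erase x).card + 2 = n := by
  have hx : x ∈ levelSet P b := by simp [levelSet, hx]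
  have := hP.two_mul_card_levelSet b
  have := Finset.card_pos.2 ⟨x, hx⟩
  rw [Finset.card_erase_of_mem hx]
  omega

theorem eq_of_levelSet_subset {Q : BStr n} (hP : BalancedStr P) (hQ : BalancedStr Q)
    {b : Bool} (hsub : levelSet P b ⊆ levelSet Q b) : P = Q := by
  have heq := Finset.eq_of_subset_of_card_le hsub
    (by have := hP.two_mul_card_levelSet b; have := hQ.two_mul_card_levelSet b; omega)
  funext i
  have hi : P i = b ↔ Q i = b := by simpa [levelSet] using congrArg (i ∈ ·) heq
  cases b <;> cases hPi : P i <;> cases hQi : Q i <;> simp_all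

theorem comp_equiv (hP : BalancedStr P) (e : Fin n ≃ Fin n) : BalancedStr (P ∘ e) := by
  have hcard : ∀ b, (Finset.univ.filter fun i => (P ∘ e) i = b).card =
      (Finset.univ.filter fun i => P i = b).card :=
    fun b => Finset.card_equiv e (by simp)
  exact (hcard false).trans (hP.trans (hcard true).symm)

end BalancedStr

theorem empRisk_eq_zero_iff {X Y : Type*} {T : List (X × Y)} (hT : T ≠ []) {f : X → Y} :
    empRisk T f = 0 ↔ ∀ p ∈ T, f p.1 = p.2 := by
  have hlen : (T.length : ℝ) ≠ 0 := by simpa using hT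
  rw [empRisk, div_eq_zero_iff, or_iff_left hlen]
  have hnonneg : ∀ p ∈ T, (0 : ℝ) ≤ if f p.1 = p.2 then 0 else 1 := by
    intro p _; split_ifs <;> norm_num
  constructor
  · intro hsum p hp
    simpa using List.all_zero_of_le_zero_le_of_sum_eq_zero (List.forall_mem_map.2 hnonneg)
      hsum (List.mem_map_of_mem hp)
  · intro hall
    exact List.sum_eq_zero (List.forall_mem_map.2 fun p hp => if_pos (hall p hp))

theorem empRisk_trainOn_eq_zero_iff {n : ℕ} {S : Finset (Fin n)} (hS : S.Nonempty)
    {h f : ℕ → Label} : empRisk (trainOn S h) f = 0 ↔ ∀ s ∈ S, f s = h s := by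
  rw [empRisk_eq_zero_iff (by simpa [trainOn] using hS.exists_mem)]
  simp [trainOn]

theorem InducedBy.regularizer_lt_of_unique_consistent {X Y : Type*} {H : Set (X → Y)}
    {ψ : H → X → NNReal} {Alg : List (X × Y) → X → Y} (hAlg : InducedBy H ψ Alg)
    (hψ : LocallyInjective H ψ) {T : List (X × Y)} {x : X} {h g : H}
    (hfin : {f : H | empRisk T f.1 = 0}.Finite) (hh : empRisk T h.1 = 0)
    (hg : empRisk T g.1 = 0) (huniq : ∀ f : H, empRisk T f.1 = 0 → f.1 x = h.1 x → f = h)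
    (hout : Alg T x = h.1 x) (hgh : g ≠ h) : ψ h x < ψ g x := by
  obtain ⟨m, hm, hmin⟩ := Set.exists_min_image _ (ψ · x) hfin ⟨h, hh⟩
  obtain ⟨f, hf, hfmin, hfx⟩ := hAlg T x ⟨m, hm, hmin⟩
  obtain rfl : f = h := huniq f hf (hfx ▸ hout)
  exact (hfmin g hg).lt_of_ne fun e => hgh (hψ x e).symm

theorem hyp_apply_of_pos {n : ℕ} (hn : 0 < n) (A B : BStr n) (x : ℕ) :
    hyp A B x = (bxor A B ⟨x % n, Nat.mod_lt x hn⟩,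
      List.ofFn (cond (bxor A B ⟨x % n, Nat.mod_lt x hn⟩) B A)) := by
  unfold hyp
  rw [dif_pos hn]
  cases bxor A B ⟨x % n, Nat.mod_lt x hn⟩ <;> rfl

theorem hyp_apply_fin {n : ℕ} (A B : BStr n) (i : Fin n) :
    hyp A B i = (bxor A B i, List.ofFn (cond (bxor A B i) B A)) := by
  simp [hyp_apply_of_pos i.pos, Nat.mod_eq_of_lt i.isLt]

theorem hyp_mem_HOTP {n : ℕ} (hn : 0 < n) {A B : BStr n} (h : BalancedStr (bxor A B)) :
    hyp A B ∈ HOTP :=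
  ⟨n, A, B, hn, h, rfl⟩

namespace HOTP

/-- The string in a label fixes the dimension `d` of the hypotheses taking that label. -/
theorem finite_setOf_apply_eq (x : ℕ) (y : Label) : {f : HOTP | f.1 x = y}.Finite := by
  refine ((Set.finite_range fun p : BStr y.2.length × BStr y.2.length => hyp p.1 p.2).preimage
    Subtype.val_injective.injOn).subset ?_
  rintro ⟨_, d, A, B, hd, -, rfl⟩ (hy : hyp A B x = y)
  obtain rfl : d = y.2.length := by
    rw [← hy, hyp_apply_of_pos hd]
    cases bxor A B _ <;> simp
  exact ⟨(A, B), rfl⟩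

theorem eq_hyp_of_eqOn_levelSet {n : ℕ} {A B : BStr n} (hAB : BalancedStr (bxor A B))
    {b : Bool} {i₀ : Fin n} (hi₀ : bxor A B i₀ = b) {f : ℕ → Label} (hf : f ∈ HOTP)
    (hfeq : ∀ i ∈ levelSet (bxor A B) b, f i = hyp A B i) : f = hyp A B := by
  obtain ⟨d, A', B', hd, hbal, rfl⟩ := hf
  have h₀ := hfeq i₀ (by simp [levelSet, hi₀])
  rw [hyp_apply_of_pos hd, hyp_apply_fin, hi₀, Prod.mk.injEq] at h₀
  obtain ⟨hbit, hstr⟩ := h₀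
  rw [hbit] at hstr
  obtain rfl : d = n := by simpa using congrArg List.length hstr
  have hpat : bxor A' B' = bxor A B := by
    refine (hAB.eq_of_levelSet_subset hbal (b := b) fun i hi => ?_).symm
    have hi' := congrArg Prod.fst (hfeq i hi)
    simp only [levelSet, Finset.mem_filter, Finset.mem_univ, true_and] at hi ⊢
    rwa [hyp_apply_fin, hyp_apply_fin, hi] at hi'
  have hstr' := List.ofFn_injective hstr
  cases b <;> simp only [cond] at hstr' <;> subst hstr' <;> congr <;> funext i <;>
    simpa [bxor] using congrFun hpat i

/-- `h_{A, P ⊕ A}`: the hypothesis of `H_OTP` with key `A` and pattern `P`. -/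
def otp {n : ℕ} (hn : 0 < n) {P : BStr n} (hP : BalancedStr P) (A : BStr n) : HOTP :=
  ⟨hyp A (bxor P A), hyp_mem_HOTP hn (by rwa [bxor_bxor_self])⟩

theorem regularizer_lt_of_learner_correct {n : ℕ} {ψ : HOTP → ℕ → NNReal}
    (hψ : LocallyInjective HOTP ψ) {Alg : List (ℕ × Label) → ℕ → Label}
    (hAlg : InducedBy HOTP ψ Alg) {P Q : BStr n} (hP : BalancedStr P) (hQ : BalancedStr Q)
    {xt xf : Fin n} {b : Bool} (hxt : P xt = b) (hxf : P xf = !b)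
    (hQP : Q = P ∘ Equiv.swap xt xf) {A A' : BStr n}
    (hstr : cond b (bxor P A) A = cond b (bxor Q A') A')
    (hS : ((levelSet P b).erase xt).Nonempty)
    (hout : Alg (trainOn ((levelSet P b).erase xt) (hyp A (bxor P A))) xt
      = hyp A (bxor P A) xt) :
    ψ (otp xt.pos hP A) xt < ψ (otp xt.pos hQ A') xt := by
  have hpat : bxor A (bxor P A) = P := bxor_bxor_self A P
  have hpat' : bxor A' (bxor Q A') = Q := bxor_bxor_self A' Q
  set S := (levelSet P b).erase xt
  have hcons : ∀ f : ℕ → Label,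
      empRisk (trainOn S (hyp A (bxor P A))) f = 0 ↔ ∀ s ∈ S, f s = hyp A (bxor P A) s :=
    fun f => empRisk_trainOn_eq_zero_iff hS
  have hagree : ∀ s ∈ S, hyp A' (bxor Q A') s = hyp A (bxor P A) s := by
    intro s hs
    obtain ⟨hsxt, hsb⟩ : s ≠ xt ∧ P s = b := by simpa [S, levelSet] using hs
    have hsxf : s ≠ xf := by rintro rfl; simp [hxf] at hsb
    have hbit : Q s = b := by
      rw [hQP, Function.comp_apply, Equiv.swap_apply_of_ne_of_ne hsxt hsxf, hsb]
    rw [hyp_apply_fin, hyp_apply_fin, hpat, hpat', hbit, hsb, hstr]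
  obtain ⟨s₀, hs₀⟩ := hS
  refine hAlg.regularizer_lt_of_unique_consistent hψ ?_ ((hcons _).2 fun _ _ => rfl)
    ((hcons _).2 hagree) ?_ hout ?_
  · exact (finite_setOf_apply_eq s₀ _).subset fun f hf => (hcons _).1 hf s₀ hs₀
  · intro f hf hfx
    refine Subtype.ext (eq_hyp_of_eqOn_levelSet (A := A) (B := bxor P A) (b := b) (i₀ := xt)
      (by rwa [hpat]) (by rwa [hpat]) f.2 fun i hi => ?_)
    rw [hpat] at hi
    by_cases hixt : i = xt
    · subst hixt; exact hfx
    · exact (hcons _).1 hf i (Finset.mem_erase.2 ⟨hixt, hi⟩)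
  · intro e
    have : (hyp A' (bxor Q A') xt).1 = (hyp A (bxor P A) xt).1 :=
      congrArg (fun f : HOTP => (f.1 xt).1) e
    rw [hyp_apply_fin, hyp_apply_fin, hpat, hpat', hQP] at this
    simp [hxt, hxf] at this

end HOTP

theorem statement8_general (d : ℕ) (C A : BStr (2 * d)) (hC : BalancedStr C)
    (xt xf : Fin (2 * d)) (hxt : xt ∈ sigma0 C) (hxf : xf ∈ sigma1 C)
    (ψ : HOTP → ℕ → NNReal) (hψ : LocallyInjective HOTP ψ)
    (Alg : List (ℕ × Label) → ℕ → Label) (hAlg : InducedBy HOTP ψ Alg) :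
    Alg (trainOn ((sigma0 C).erase xt) (hyp A (bxor C A))) xt
        ≠ hyp A (bxor C A) xt ∨
    Alg (trainOn ((sigma1 (flip2 C xt xf)).erase xt)
          (hyp A (bxor (flip2 C xt xf) A))) xt
        ≠ hyp A (bxor (flip2 C xt xf) A) xt ∨
    Alg (trainOn ((sigma0 C).erase xt)
          (hyp (flip2 A xt xf) (bxor C (flip2 A xt xf)))) xt
        ≠ hyp (flip2 A xt xf) (bxor C (flip2 A xt xf)) xt ∨
    Alg (trainOn ((sigma1 (flip2 C xt xf)).erase xt)
          (hyp (flip2 A xt xf) (bxor (flip2 C xt xf) (flip2 A xt xf)))) xt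
        ≠ hyp (flip2 A xt xf) (bxor (flip2 C xt xf) (flip2 A xt xf)) xt := by
  have hCxt : C xt = false := by simpa [sigma0] using hxt
  have hCxf : C xf = true := by simpa [sigma1] using hxf
  set C' := flip2 C xt xf
  set A' := flip2 A xt xf
  have hC' : C' = C ∘ Equiv.swap xt xf := flip2_eq_comp_swap (by simp [hCxt, hCxf])
  have hC'bal : BalancedStr C' := hC' ▸ hC.comp_equiv _
  have hC'xt : C' xt = true := by simp [hC', hCxf]
  have hC'xf : C' xf = false := by simp [hC', hCxt]
  have hCswap : C = C' ∘ Equiv.swap xt xf := by ext i; simp [hC']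
  by_contra! ⟨e₁, e₂, e₃, e₄⟩
  have hcard : ((levelSet C' true).erase xt).card = ((levelSet C false).erase xt).card := by
    have := hC.card_levelSet_erase hCxt; have := hC'bal.card_levelSet_erase hC'xt; omega
  rcases ((levelSet C false).erase xt).eq_empty_or_nonempty with hS₀ | hS₀
  -- `d = 1`: the first two instances share the empty training sequence but differ at `xt`.
  · have hS₁ : (levelSet C' true).erase xt = ∅ := by
      rw [← Finset.card_eq_zero, hcard, hS₀, Finset.card_empty]
    have hnil : ∀ h, trainOn (∅ : Finset (Fin (2 * d))) h = [] := fun _ => by simp [trainOn]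
    rw [sigma0_eq_levelSet, hS₀, hnil] at e₁
    rw [sigma1_eq_levelSet, hS₁, hnil, e₁] at e₂
    simpa [hyp_apply_fin, bxor_bxor_self, hCxt, hC'xt] using congrArg Prod.fst e₂
  have hS₁ : ((levelSet C' true).erase xt).Nonempty := by
    rw [← Finset.card_pos, hcard]; exact hS₀.card_pos
  have r₁₂ := HOTP.regularizer_lt_of_learner_correct hψ hAlg hC hC'bal hCxt hCxf hC'
    (A := A) (A' := A) rfl hS₀ e₁
  have r₂₃ := HOTP.regularizer_lt_of_learner_correct hψ hAlg hC'bal hC hC'xt hC'xf hCswap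
    (bxor_flip2_left C A xt xf) hS₁ e₂
  have r₃₄ := HOTP.regularizer_lt_of_learner_correct hψ hAlg hC hC'bal hCxt hCxf hC'
    (A := A') (A' := A') rfl hS₀ e₃
  have r₄₁ := HOTP.regularizer_lt_of_learner_correct hψ hAlg hC'bal hC hC'xt hC'xf hCswap
    (bxor_flip2_flip2 C A xt xf) hS₁ e₄
  exact lt_irrefl _ (r₁₂.trans (r₂₃.trans (r₃₄.trans r₄₁)))

/-- in the four coupled transductive instances built from balanced
`C ∈ {0,1}^{2d}`, `A ∈ {0,1}^{2d}`, `x_test ∈ σ₀(C)`, `x_fool ∈ σ₁(C)`, every learner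
induced by a locally injective local regularizer errs at `x_test` in at least one
instance. -/
theorem statement8 (d : ℕ) (hd : 1 ≤ d) (C A : BStr (2 * d)) (hC : BalancedStr C)
    (xt xf : Fin (2 * d)) (hxt : xt ∈ sigma0 C) (hxf : xf ∈ sigma1 C)
    (ψ : HOTP → ℕ → NNReal) (hψ : LocallyInjective HOTP ψ)
    (Alg : List (ℕ × Label) → ℕ → Label) (hAlg : InducedBy HOTP ψ Alg) :
    Alg (trainOn ((sigma0 C).erase xt) (hyp A (bxor C A))) xt
        ≠ hyp A (bxor C A) xt ∨
    Alg (trainOn ((sigma1 (flip2 C xt xf)).erase xt)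
          (hyp A (bxor (flip2 C xt xf) A))) xt
        ≠ hyp A (bxor (flip2 C xt xf) A) xt ∨
    Alg (trainOn ((sigma0 C).erase xt)
          (hyp (flip2 A xt xf) (bxor C (flip2 A xt xf)))) xt
        ≠ hyp (flip2 A xt xf) (bxor C (flip2 A xt xf)) xt ∨
    Alg (trainOn ((sigma1 (flip2 C xt xf)).erase xt)
          (hyp (flip2 A xt xf) (bxor (flip2 C xt xf) (flip2 A xt xf)))) xt
        ≠ hyp (flip2 A xt xf) (bxor (flip2 C xt xf) (flip2 A xt xf)) xt :=
  statement8_general d C A hC xt xf hxt hxf ψ hψ Alg hAlg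
end
end

section
/- Let d ≥ 1, let C ∈ {0,1}^{2d} be balanced, and let A ∈ {0,1}^{2d}. Then h_{A, C⊕A} is the unique hypothesis h ∈ H_OTP satisfying h(s) = (0, A) for every s ∈ σ0(C). -/
/-! A competitor `h_{A',B'}` outputs `(0, A)` somewhere on the nonempty set `σ₀(C)`, and every
output of `h_{A',B'}` with first bit `0` is `(0, A')`; hence `A' = A`, lengths included. It
outputs first bit `0` on all of `σ₀(C)`, so `σ₀(C) ⊆ σ₀(A ⊕ B')`. Both strings are balanced of the
same length, so these sets have the same size and coincide: `A ⊕ B' = C`, i.e. `B' = C ⊕ A`. -/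

open scoped Classical

noncomputable section

theorem bxor_eq_iff {d : ℕ} {A B C : BStr d} : bxor A B = C ↔ B = bxor C A := by
  constructor <;> rintro rfl <;> funext i <;> simp only [bxor] <;> cases A i <;> simp

theorem sigma0_injective {d : ℕ} : Function.Injective (sigma0 (d := d)) := by
  intro C D h
  funext i
  have hi := congrArg (i ∈ ·) h
  simp only [sigma0, Finset.mem_filter, Finset.mem_univ, true_and, eq_iff_iff] at hi
  cases hC : C i <;> cases hD : D i <;> simp_all

theorem card_sigma0_add_card_sigma1 {d : ℕ} (C : BStr d) :
    (sigma0 C).card + (sigma1 C).card = d := by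
  simpa [sigma0, sigma1] using
    Finset.card_filter_add_card_filter_not (s := Finset.univ) (fun i => C i = false)

theorem BalancedStr.two_mul_card_sigma0 {d : ℕ} {C : BStr d} (hC : BalancedStr C) :
    2 * (sigma0 C).card = d := by
  have := card_sigma0_add_card_sigma1 C
  rw [← hC] at this
  omega

theorem BalancedStr.eq_of_sigma0_subset {d : ℕ} {C D : BStr d} (hC : BalancedStr C)
    (hD : BalancedStr D) (h : sigma0 C ⊆ sigma0 D) : C = D := by
  refine sigma0_injective (Finset.eq_of_subset_of_card_le h ?_)
  have := hC.two_mul_card_sigma0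
  have := hD.two_mul_card_sigma0
  omega

theorem hyp_val {d : ℕ} (A B : BStr d) (i : Fin d) :
    hyp A B i = bif bxor A B i then (true, List.ofFn B) else (false, List.ofFn A) := by
  have hidx : (⟨(i : ℕ) % d, Nat.mod_lt _ i.pos⟩ : Fin d) = i := Fin.ext (Nat.mod_eq_of_lt i.isLt)
  simp only [hyp, dif_pos i.pos, hidx]
  cases bxor A B i <;> rfl

theorem ofFn_eq_of_hyp_eq {d : ℕ} {A B : BStr d} {x : ℕ} {l : List Bool}
    (h : hyp A B x = (false, l)) : List.ofFn A = l := by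
  unfold hyp at h
  split_ifs at h <;> simp_all

theorem hyp_val_of_mem_sigma0 {d : ℕ} (A B : BStr d) {i : Fin d} (hi : i ∈ sigma0 (bxor A B)) :
    hyp A B i = (false, List.ofFn A) := by
  simp only [sigma0, Finset.mem_filter, Finset.mem_univ, true_and] at hi
  simp [hyp_val, hi]

theorem sigma0_subset_of_hyp_eq {d : ℕ} {A B C : BStr d}
    (h : ∀ s ∈ sigma0 C, hyp A B s = (false, List.ofFn A)) : sigma0 C ⊆ sigma0 (bxor A B) := by
  intro s hs
  have := congrArg Prod.fst (h s hs)
  rw [hyp_val] at this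
  cases hs' : bxor A B s <;> simp_all [sigma0]

theorem hyp_eq_of_eq_on_sigma0 {n d : ℕ} {C A : BStr n} (hC : BalancedStr C)
    (hC0 : (sigma0 C).Nonempty) {A' B' : BStr d} (hAB' : BalancedStr (bxor A' B'))
    (h : ∀ s ∈ sigma0 C, hyp A' B' s = (false, List.ofFn A)) :
    hyp A' B' = hyp A (bxor C A) := by
  obtain ⟨s₀, hs₀⟩ := hC0
  cases List.ofFn_inj'.mp (ofFn_eq_of_hyp_eq (h s₀ hs₀))
  rw [bxor_eq_iff.mp (hC.eq_of_sigma0_subset hAB' (sigma0_subset_of_hyp_eq h)).symm]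

/-- `h_{A, C⊕A}` is the unique hypothesis in `H_OTP` mapping every
`s ∈ σ₀(C)` to `(0, A)`. -/
theorem statement10 (d : ℕ) (hd : 1 ≤ d) (C : BStr (2 * d)) (hC : BalancedStr C)
    (A : BStr (2 * d)) :
    hyp A (bxor C A) ∈ HOTP ∧
    (∀ s ∈ sigma0 C, hyp A (bxor C A) s = (false, List.ofFn A)) ∧
    ∀ h ∈ HOTP, (∀ s ∈ sigma0 C, h s = (false, List.ofFn A)) →
      h = hyp A (bxor C A) := by
  have hAC : bxor A (bxor C A) = C := bxor_eq_iff.mpr rfl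
  have hC0 : (sigma0 C).Nonempty := by
    rw [← Finset.card_pos]
    have := hC.two_mul_card_sigma0
    omega
  refine ⟨⟨2 * d, A, bxor C A, by omega, by rwa [hAC], rfl⟩, fun s hs => ?_, ?_⟩
  · exact hyp_val_of_mem_sigma0 A (bxor C A) (by rwa [hAC])
  · rintro _ ⟨d', A', B', -, hAB', rfl⟩ h
    exact hyp_eq_of_eq_on_sigma0 hC hC0 hAB' h
end
end

section
/- Fix d ≥ 1, a balanced C ∈ {0,1}^{2d}, A ∈ {0,1}^{2d}, x_test ∈ σ0(C) and x_fool ∈ σ1(C), and define C̄, Ā, h1, h2, h3, h4 as in the context. Then: h2(s) = h3(s) and h4(s) = h1(s) for every s ∈ σ1(C̄) \ {x_test}; moreover h2(x_test) = (1, C̄⊕A) ≠ (0, Ā) = h3(x_test), and h4(x_test) = (1, C⊕A) ≠ (0, A) = h1(x_test). -/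
open scoped Classical

noncomputable section

/- Each of the four hypotheses has the form `h_{A', X ⊕ A'}`, whose value at a position `x` is
`(1, X ⊕ A')` if `X x = 1` and `(0, A')` otherwise. A double flip moves across `⊕` and is an
involution, so `C̄ ⊕ A = C ⊕ Ā` and `C̄ ⊕ Ā = C ⊕ A`: thus `h2, h3` (resp. `h4, h1`) carry the
same `1`-label and agree wherever `C̄` and `C` are both `1`, i.e. on `σ₁(C̄) \ {x_test}`, while at
`x_test` the string `C̄` is `1` and `C` is `0`. -/

section BStr

variable {d : ℕ}

lemma mem_sigma0 {C : BStr d} {i : Fin d} : i ∈ sigma0 C ↔ C i = false := by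
  simp [sigma0]

lemma mem_sigma1 {C : BStr d} {i : Fin d} : i ∈ sigma1 C ↔ C i = true := by
  simp [sigma1]

lemma bxor_bxor_right_self (A X : BStr d) : bxor A (bxor X A) = X := by
  funext i
  simp only [bxor]
  cases A i <;> cases X i <;> rfl

lemma flip2_apply_of_ne (C : BStr d) {x x' s : Fin d} (hx : s ≠ x) (hx' : s ≠ x') :
    flip2 C x x' s = C s := by
  simp [flip2, bxor, evec, hx, hx']

lemma flip2_apply_left (C : BStr d) {x x' : Fin d} (h : x ≠ x') : flip2 C x x' x = !C x := by
  simp [flip2, bxor, evec, h]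

lemma flip2_apply_right (C : BStr d) {x x' : Fin d} (h : x ≠ x') : flip2 C x x' x' = !C x' := by
  simp [flip2, bxor, evec, h.symm]

lemma flip2_bxor (C A : BStr d) (x x' : Fin d) :
    bxor (flip2 C x x') A = bxor C (flip2 A x x') := by
  funext i
  simp only [flip2, bxor]
  cases C i <;> cases A i <;> cases evec x i <;> cases evec x' i <;> rfl

lemma flip2_flip2 (C : BStr d) (x x' : Fin d) : flip2 (flip2 C x x') x x' = C := by
  funext i
  simp only [flip2, bxor]
  cases C i <;> cases evec x i <;> cases evec x' i <;> rfl

lemma hyp_coe_fin (A B : BStr d) (x : Fin d) :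
    hyp A B x = if bxor A B x then (true, List.ofFn B) else (false, List.ofFn A) := by
  have hmod : (⟨x % d, Nat.mod_lt _ x.pos⟩ : Fin d) = x := Fin.ext (Nat.mod_eq_of_lt x.isLt)
  simp [hyp, x.pos, hmod]

lemma hyp_bxor_coe_fin (A X : BStr d) (x : Fin d) :
    hyp A (bxor X A) x = if X x then (true, List.ofFn (bxor X A)) else (false, List.ofFn A) := by
  rw [hyp_coe_fin, bxor_bxor_right_self]

end BStr

theorem statement13_general (d : ℕ) (C A : BStr (2 * d))
    (xt xf : Fin (2 * d)) (hxt : xt ∈ sigma0 C) (hxf : xf ∈ sigma1 C) :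
    (∀ s ∈ sigma1 (flip2 C xt xf), s ≠ xt →
        hyp A (bxor (flip2 C xt xf) A) s
          = hyp (flip2 A xt xf) (bxor C (flip2 A xt xf)) s ∧
        hyp (flip2 A xt xf) (bxor (flip2 C xt xf) (flip2 A xt xf)) s
          = hyp A (bxor C A) s) ∧
    hyp A (bxor (flip2 C xt xf) A) xt = (true, List.ofFn (bxor (flip2 C xt xf) A)) ∧
    hyp (flip2 A xt xf) (bxor C (flip2 A xt xf)) xt
      = (false, List.ofFn (flip2 A xt xf)) ∧
    hyp A (bxor (flip2 C xt xf) A) xt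
      ≠ hyp (flip2 A xt xf) (bxor C (flip2 A xt xf)) xt ∧
    hyp (flip2 A xt xf) (bxor (flip2 C xt xf) (flip2 A xt xf)) xt
      = (true, List.ofFn (bxor C A)) ∧
    hyp A (bxor C A) xt = (false, List.ofFn A) ∧
    hyp (flip2 A xt xf) (bxor (flip2 C xt xf) (flip2 A xt xf)) xt
      ≠ hyp A (bxor C A) xt := by
  rw [mem_sigma0] at hxt
  rw [mem_sigma1] at hxf
  have hne : xt ≠ xf := by rintro rfl; simp [hxt] at hxf
  have hflip_xt : flip2 C xt xf xt = true := by rw [flip2_apply_left C hne, hxt]; rfl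
  have hC_of_flip : ∀ s, flip2 C xt xf s = true → s ≠ xt → C s = true := by
    intro s hs hsxt
    have hsxf : s ≠ xf := by rintro rfl; simp [flip2_apply_right C hne, hxf] at hs
    rwa [flip2_apply_of_ne C hsxt hsxf] at hs
  refine ⟨fun s hs hsxt => ?_, ?_⟩
  · rw [mem_sigma1] at hs
    simp only [hyp_bxor_coe_fin]
    simp [hs, hC_of_flip s hs hsxt, flip2_bxor, flip2_flip2]
  · simp only [hyp_bxor_coe_fin]
    simp [hflip_xt, hxt, flip2_bxor, flip2_flip2]

/-- with `C̄ = C ⊕ e(x_test) ⊕ e(x_fool)` and `Ā = A ⊕ e(x_test) ⊕ e(x_fool)`,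
the hypotheses `h1 = h_{A,C⊕A}`, `h2 = h_{A,C̄⊕A}`, `h3 = h_{Ā,C⊕Ā}`, `h4 = h_{Ā,C̄⊕Ā}`
satisfy `h2 = h3` and `h4 = h1` on `σ₁(C̄) \ {x_test}`, while `h2(x_test) = (1,C̄⊕A) ≠
(0,Ā) = h3(x_test)` and `h4(x_test) = (1,C⊕A) ≠ (0,A) = h1(x_test)`. -/
theorem statement13 (d : ℕ) (hd : 1 ≤ d) (C A : BStr (2 * d)) (hC : BalancedStr C)
    (xt xf : Fin (2 * d)) (hxt : xt ∈ sigma0 C) (hxf : xf ∈ sigma1 C) :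
    (∀ s ∈ sigma1 (flip2 C xt xf), s ≠ xt →
        hyp A (bxor (flip2 C xt xf) A) s
          = hyp (flip2 A xt xf) (bxor C (flip2 A xt xf)) s ∧
        hyp (flip2 A xt xf) (bxor (flip2 C xt xf) (flip2 A xt xf)) s
          = hyp A (bxor C A) s) ∧
    hyp A (bxor (flip2 C xt xf) A) xt = (true, List.ofFn (bxor (flip2 C xt xf) A)) ∧
    hyp (flip2 A xt xf) (bxor C (flip2 A xt xf)) xt
      = (false, List.ofFn (flip2 A xt xf)) ∧
    hyp A (bxor (flip2 C xt xf) A) xt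
      ≠ hyp (flip2 A xt xf) (bxor C (flip2 A xt xf)) xt ∧
    hyp (flip2 A xt xf) (bxor (flip2 C xt xf) (flip2 A xt xf)) xt
      = (true, List.ofFn (bxor C A)) ∧
    hyp A (bxor C A) xt = (false, List.ofFn A) ∧
    hyp (flip2 A xt xf) (bxor (flip2 C xt xf) (flip2 A xt xf)) xt
      ≠ hyp A (bxor C A) xt :=
  statement13_general d C A xt xf hxt hxf
end
end

section
/- There exists a hypothesis class with distinct label sets that is not transductively learnable. Concretely: let X = Option ℕ and Y = Bool ⊕ (ℕ → Bool); for each f : ℕ → Bool define g_f : X → Y by g_f(some n) = inl(f(n)) and g_f(none) = inr(f), and let H = {g_f : f : ℕ → Bool}. Then H has distinct label sets but H is not transductively learnable. -/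
open scoped Classical

noncomputable section

/-- For `f : ℕ → Bool`, the hypothesis `g_f : Option ℕ → Bool ⊕ (ℕ → Bool)` mapping
`some n` to `inl (f n)` and `none` to `inr f`. -/
def gfun (f : ℕ → Bool) : Option ℕ → Bool ⊕ (ℕ → Bool) := fun x =>
  match x with
  | some n => Sum.inl (f n)
  | none => Sum.inr f

/-!
No-free-lunch argument. Take the sample `some 0, …, some (n-1)` and let the labels on it range
over all `2^n` patterns. Flipping the label of point `i` does not change what the learner sees
when `i` is left out, but changes the correct answer at `i`; so for each `i` the learner errs on
at least half of the patterns, and averaging gives a pattern with transductive error `≥ 1/2`.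
The label sets are nevertheless distinct, because the label `inr f` at `none` alone determines `f`.
-/

open Finset

section Transductive

variable {X Y : Type*} {n : ℕ}

def looMistake (A : List (X × Y) → X → Y) (S : Fin n → X) (h : X → Y) (i : Fin n) : ℝ :=
  if A (trainSeq S h i) (S i) = h (S i) then 0 else 1

lemma transErr_eq_sum_looMistake (A : List (X × Y) → X → Y) (S : Fin n → X) (h : X → Y) :
    transErr A S h = (∑ i, looMistake A S h i) / n :=
  rfl

lemma List.eraseIdx_ofFn_congr {α : Type*} {g g' : Fin n → α} {i : Fin n}
    (h : ∀ j, j ≠ i → g j = g' j) :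
    (List.ofFn g).eraseIdx i = (List.ofFn g').eraseIdx i := by
  refine List.ext_getElem ?_ fun j _ _ => ?_
  · simp [List.length_eraseIdx]
  simp only [List.getElem_eraseIdx, List.getElem_ofFn]
  split_ifs <;> apply h <;> rw [Ne, Fin.ext_iff] <;> simp <;> omega

lemma trainSeq_congr {S : Fin n → X} {h h' : X → Y} {i : Fin n}
    (hagree : ∀ j, j ≠ i → h (S j) = h' (S j)) :
    trainSeq S h i = trainSeq S h' i :=
  List.eraseIdx_ofFn_congr fun j hj => by rw [hagree j hj]

lemma one_le_looMistake_add_looMistake (A : List (X × Y) → X → Y) {S : Fin n → X}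
    {h h' : X → Y} {i : Fin n} (hagree : ∀ j, j ≠ i → h (S j) = h' (S j))
    (hne : h (S i) ≠ h' (S i)) :
    1 ≤ looMistake A S h i + looMistake A S h' i := by
  rw [looMistake, looMistake, trainSeq_congr hagree]
  split_ifs with h₁ h₂
  · exact absurd (h₁.symm.trans h₂) hne
  all_goals norm_num

lemma card_le_two_mul_sum_of_involutive {α R : Type*} [Fintype α] [CommSemiring R]
    [PartialOrder R] [IsOrderedRing R] {φ : α → α} (hφ : Function.Involutive φ) (w : α → R)
    (hw : ∀ a, 1 ≤ w a + w (φ a)) :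
    (Fintype.card α : R) ≤ 2 * ∑ a, w a :=
  calc (Fintype.card α : R) = ∑ _a : α, (1 : R) := by simp
    _ ≤ ∑ a, (w a + w (φ a)) := sum_le_sum fun a _ => hw a
    _ = 2 * ∑ a, w a := by rw [sum_add_distrib, hφ.bijective.sum_comp w]; ring

lemma exists_half_le_transErr (hn : 0 < n) (A : List (X × Y) → X → Y) (S : Fin n → X)
    (g : (Fin n → Bool) → X → Y)
    (hagree : ∀ f i j, j ≠ i → g f (S j) = g (Function.update f i (!f i)) (S j))
    (hne : ∀ f i, g f (S i) ≠ g (Function.update f i (!f i)) (S i)) :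
    ∃ f, 1 / 2 ≤ transErr A S (g f) := by
  have hflip (i : Fin n) : Function.Involutive fun f : Fin n → Bool => Function.update f i (!f i) :=
    fun f => by simp
  have hpair (i : Fin n) : (2 : ℝ) ^ n ≤ 2 * ∑ f, looMistake A S (g f) i := by
    simpa using card_le_two_mul_sum_of_involutive (hflip i) (fun f => looMistake A S (g f) i)
      fun f => one_le_looMistake_add_looMistake A (hagree f i) (hne f i)
  have hsum : ∑ _f : Fin n → Bool, (1 / 2 : ℝ) ≤ ∑ f, transErr A S (g f) :=
    calc ∑ _f : Fin n → Bool, (1 / 2 : ℝ) = (∑ _i : Fin n, (2 : ℝ) ^ n / 2) / n := by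
          simp [field]
      _ ≤ (∑ i, ∑ f, looMistake A S (g f) i) / n := by
          gcongr with i
          linarith [hpair i]
      _ = ∑ f, transErr A S (g f) := by
          simp only [transErr_eq_sum_looMistake, ← sum_div]
          rw [sum_comm]
  obtain ⟨f, -, hf⟩ := exists_le_of_sum_le univ_nonempty hsum
  exact ⟨f, hf⟩

end Transductive

lemma inr_mem_range_gfun_iff {f f' : ℕ → Bool} : Sum.inr f' ∈ Set.range (gfun f) ↔ f = f' := by
  constructor
  · rintro ⟨_ | k, hk⟩ <;> simp_all [gfun]
  · rintro rfl
    exact ⟨none, rfl⟩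

lemma distinctLabelSets_range_gfun : DistinctLabelSets (Set.range gfun) := by
  rintro _ ⟨f, rfl⟩ _ ⟨f', rfl⟩ hrange
  have hf : Sum.inr f ∈ Set.range (gfun f') := hrange ▸ inr_mem_range_gfun_iff.mpr rfl
  rw [inr_mem_range_gfun_iff.mp hf]

lemma exists_half_le_transErr_gfun
    (A : List (Option ℕ × (Bool ⊕ (ℕ → Bool))) → Option ℕ → Bool ⊕ (ℕ → Bool))
    {n : ℕ} (hn : 0 < n) :
    ∃ h ∈ Set.range gfun, ∃ S : Fin n → Option ℕ, 1 / 2 ≤ transErr A S h := by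
  let g (f : Fin n → Bool) := gfun (Function.extend Fin.val f fun _ => false)
  have hg (f : Fin n → Bool) (j : Fin n) : g f (some j) = Sum.inl (f j) := by
    simp [g, gfun, Fin.val_injective.extend_apply]
  obtain ⟨f, hf⟩ := exists_half_le_transErr hn A (fun i => some i) g
    (fun f i j hji => by simp [hg, Function.update_of_ne hji])
    (fun f i => by simp [hg])
  exact ⟨g f, ⟨_, rfl⟩, _, hf⟩

/-- the class `{g_f : f : ℕ → Bool}` has distinct label sets but is not
transductively learnable. -/
theorem statement17 :
    DistinctLabelSets (Set.range gfun) ∧ ¬ TransLearnable (Set.range gfun) := by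
  refine ⟨distinctLabelSets_range_gfun, fun ⟨A, m, hm⟩ => ?_⟩
  obtain ⟨h, hH, S, hS⟩ := exists_half_le_transErr_gfun A (Nat.succ_pos (m (1 / 3)))
  have := hm (1 / 3) (by norm_num) (by norm_num) h hH _ S (Nat.le_succ _)
  linarith
end
end
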